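/- For an ordinal β let P_β denote the set of pairs {(γ_0, γ_1) : γ_0 ≤ γ_1 < β} ordered componentwise. If α ≥ ω^ω is a multiplicatively indecomposable ordinal, then sup_{α' < α} w(P_{α'}) ≥ α. -/

import Mathlib

open Ordinal

universe u

namespace Ordinal

/-- Natural (Hessenberg) addition, as in Mathlib's former `Ordinal.nadd`. -/
noncomputable def nadd : Ordinal.{u} → Ordinal.{u} → Ordinal.{u}
  | a, b =>
    max (blsub.{u, u} a fun a' _ => nadd a' b) (blsub.{u, u} b fun b' _ => nadd a b')
termination_by a b => (a, b)

/-- Natural (Hessenberg) multiplication, as in Mathlib's former `Ordinal.nmul`. -/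
noncomputable def nmul : Ordinal.{u} → Ordinal.{u} → Ordinal.{u}
  | a, b => sInf {c | ∀ a' < a, ∀ b' < b, nadd (nmul a' b) (nmul a b') < nadd c (nmul a' b')}
termination_by a b => (a, b)

end Ordinal

namespace NaturalOps

scoped infixl:65 " ♯ " => Ordinal.nadd

scoped infixl:70 " ⨳ " => Ordinal.nmul

end NaturalOps
/-- A preordered type is a well-quasi-order when every infinite sequence
contains an increasing pair. -/
def IsWqo (A : Type u) [Preorder A] : Prop :=
  ∀ f : ℕ → A, ∃ i j : ℕ, i < j ∧ f i ≤ f j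

/-- In the tree of finite sequences satisfying `P` (ordered by reverse prefix),
`t` is a child of `s` when `t` extends `s` by one element and satisfies `P`. -/
def ExtRel {A : Type u} (P : List A → Prop) (t s : List A) : Prop :=
  P t ∧ ∃ a : A, t = s ++ [a]

/-- The ordinal rank of the tree of finite sequences satisfying `P`, i.e. the rank of its
root (the empty sequence): the rank of a node is `0` on leaves and otherwise the supremum
of the successors of the ranks of its children.  (Junk value `0` when the tree is not
well-founded; in the statements below the wqo hypotheses guarantee well-foundedness.) -/
noncomputable def treeRank {A : Type u} (P : List A → Prop) : Ordinal.{u} :=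
  @dite _ (Acc (ExtRel P) ([] : List A)) (Classical.dec _) (fun h => h.rank) (fun _ => 0)

/-- The maximal order type `o(A)`: the rank of the tree `Bad(A)` of bad sequences. -/
noncomputable def mot (A : Type u) [Preorder A] : Ordinal.{u} :=
  treeRank (fun l : List A => l.Pairwise (fun a b => ¬ a ≤ b))

/-- The height `h(A)`: the rank of the tree `Dec(A)` of strictly decreasing sequences. -/
noncomputable def height (A : Type u) [Preorder A] : Ordinal.{u} :=
  treeRank (fun l : List A => l.Pairwise (fun a b => b < a))

/-- The width `w(A)`: the rank of the tree `Inco(A)` of sequences of pairwise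
incomparable elements. -/
noncomputable def width (A : Type u) [Preorder A] : Ordinal.{u} :=
  treeRank (fun l : List A => l.Pairwise (fun a b => ¬ a ≤ b ∧ ¬ b ≤ a))

open NaturalOps

theorem acc_of_hom {A B : Type u} {r : A → A → Prop} {s : B → B → Prop} {f : A → B}
    (hf : ∀ x y, r x y → s (f x) (f y)) {a : A} (hb : Acc s (f a)) : Acc r a := by
  generalize h : f a = b at hb
  induction hb generalizing a with
  | intro b _ IH =>
    subst h
    exact Acc.intro a fun y hy => IH _ (hf _ _ hy) rfl

theorem rank_le_of_hom {A B : Type u} {r : A → A → Prop} {s : B → B → Prop} {f : A → B}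
    (hf : ∀ x y, r x y → s (f x) (f y)) {a : A} (ha : Acc r a) :
    ∀ hb : Acc s (f a), ha.rank ≤ hb.rank := by
  induction ha with
  | intro a hacc IH =>
    intro hb
    rw [Acc.rank_eq]
    apply Ordinal.iSup_le
    rintro ⟨y, hy⟩
    exact Order.succ_le_of_lt (lt_of_le_of_lt (IH y hy (hb.inv (hf _ _ hy)))
      (hb.rank_lt_of_rel (hf _ _ hy)))

def Inco (A : Type u) [Preorder A] : List A → Prop :=
  fun l => l.Pairwise (fun a b => ¬ a ≤ b ∧ ¬ b ≤ a)

theorem width_def (A : Type u) [Preorder A] : width A = treeRank (Inco A) := rfl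

theorem extrel_hom {A B : Type u} [Preorder A] [Preorder B] (φ : A → B) (s : List B)
    (hφ : ∀ a b : A, φ a ≤ φ b → a ≤ b)
    (hs : s.Pairwise (fun a b => ¬ a ≤ b ∧ ¬ b ≤ a))
    (hc : ∀ x ∈ s, ∀ a : A, ¬ x ≤ φ a ∧ ¬ φ a ≤ x) :
    ∀ t l : List A, ExtRel (Inco A) t l →
      ExtRel (Inco B) (s ++ t.map φ) (s ++ l.map φ) := by
  rintro t l ⟨hP, a, rfl⟩
  constructor
  · rw [Inco, List.pairwise_append]
    refine ⟨hs, ?_, ?_⟩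
    · rw [List.pairwise_map]
      exact hP.imp fun h => ⟨fun h' => h.1 (hφ _ _ h'), fun h' => h.2 (hφ _ _ h')⟩
    · intro x hx b hb
      obtain ⟨a', _, rfl⟩ := List.mem_map.mp hb
      exact hc x hx a'
  · exact ⟨φ a, by simp⟩

theorem acc_extRel_of_isWqo {A : Type u} [Preorder A] (h : IsWqo A) (l : List A) :
    Acc (ExtRel (Inco A)) l := by
  by_contra hl
  set r := ExtRel (Inco A) with hr
  have key : ∀ p : {x : List A // ¬ Acc r x}, ∃ y : {x : List A // ¬ Acc r x}, r y.1 p.1 := by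
    rintro ⟨x, hx⟩
    by_contra hy
    push_neg at hy
    refine hx (Acc.intro x fun y hyx => ?_)
    by_contra hacc
    exact hy ⟨y, hacc⟩ hyx
  choose next hnext using key
  set g : ℕ → {x : List A // ¬ Acc r x} := fun n => next^[n] ⟨l, hl⟩ with hgdef
  have hg : ∀ n, r (g (n+1)).1 (g n).1 := by
    intro n
    have : g (n+1) = next (g n) := Function.iterate_succ_apply' next n _
    rw [this]
    exact hnext _
  have ha : ∀ n, ∃ a : A, (g (n+1)).1 = (g n).1 ++ [a] := fun n => (hg n).2
  choose a haspec using ha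
  have hmem : ∀ i j, i < j → a i ∈ (g j).1 := by
    intro i j hij
    induction j with
    | zero => omega
    | succ j IH =>
      rw [haspec j]
      rcases Nat.lt_succ_iff_lt_or_eq.mp hij with h' | h'
      · exact List.mem_append_left _ (IH h')
      · subst h'; exact List.mem_append_right _ (List.mem_singleton_self _)
  have hpw : ∀ i j, i < j → ¬ a i ≤ a j := by
    intro i j hij
    have hP : Inco A (g (j+1)).1 := (hg j).1
    rw [haspec j, Inco, List.pairwise_append] at hP
    exact (hP.2.2 (a i) (hmem i j hij) (a j) (List.mem_singleton_self _)).1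
  obtain ⟨i, j, hij, hle⟩ := h a
  exact hpw i j hij hle

theorem treeRank_eq {A : Type u} {P : List A → Prop} (h : Acc (ExtRel P) ([] : List A)) :
    treeRank P = h.rank := by
  rw [treeRank, dif_pos h]

theorem width_le_of_map {A B : Type u} [Preorder A] [Preorder B] (φ : A → B)
    (hφ : ∀ a b : A, φ a ≤ φ b → a ≤ b)
    (hB : Acc (ExtRel (Inco B)) ([] : List B)) : width A ≤ width B := by
  have hhom := extrel_hom φ [] hφ List.Pairwise.nil (by simp)
  have hA : Acc (ExtRel (Inco A)) ([] : List A) :=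
    acc_of_hom (f := fun l : List A => [] ++ l.map φ) (fun x y => hhom x y) hB
  rw [width_def, width_def, treeRank_eq hA, treeRank_eq hB]
  exact rank_le_of_hom (f := fun l : List A => [] ++ l.map φ) (fun x y => hhom x y) hA hB

theorem width_add_one_le {A B : Type u} [Preorder A] [Preorder B] (φ : A → B) (x0 : B)
    (hφ : ∀ a b : A, φ a ≤ φ b → a ≤ b)
    (hcross : ∀ a : A, ¬ x0 ≤ φ a ∧ ¬ φ a ≤ x0)
    (hB : Acc (ExtRel (Inco B)) ([] : List B)) : width A + 1 ≤ width B := by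
  have hx0 : ExtRel (Inco B) [x0] [] :=
    ⟨List.pairwise_singleton _ _, x0, rfl⟩
  have hs : Acc (ExtRel (Inco B)) [x0] := hB.inv hx0
  have hhom := extrel_hom φ [x0] hφ (List.pairwise_singleton _ _)
    (by intro x hx a; rw [List.mem_singleton] at hx; subst hx; exact hcross a)
  have hA : Acc (ExtRel (Inco A)) ([] : List A) :=
    acc_of_hom (f := fun l : List A => [x0] ++ l.map φ) (fun x y => hhom x y) hs
  have h1 : hA.rank ≤ hs.rank :=
    rank_le_of_hom (f := fun l : List A => [x0] ++ l.map φ) (fun x y => hhom x y) hA hs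
  have h2 : hs.rank < hB.rank := hB.rank_lt_of_rel hx0
  rw [width_def, width_def, treeRank_eq hA, treeRank_eq hB, Ordinal.add_one_eq_succ]
  exact Order.succ_le_of_lt (lt_of_le_of_lt h1 h2)

/-- The poset of increasing pairs below `x`. -/
abbrev Pt (x : Ordinal.{0}) : Type :=
  {p : x.ToType × x.ToType // p.1 ≤ p.2}

theorem isWqo_Pt (x : Ordinal.{0}) : IsWqo (Pt x) := by
  intro f
  have hwf : (Set.univ : Set x.ToType).IsWF := Set.isWF_univ_iff.2 inferInstance
  have hp : (Set.univ ×ˢ Set.univ : Set (x.ToType × x.ToType)).IsPWO :=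
    hwf.isPWO.prod hwf.isPWO
  obtain ⟨m, n, hmn, hle⟩ := hp (fun n => ⟨(f n).1, by simp⟩)
  exact ⟨m, n, hmn, hle⟩

theorem acc_Pt (x : Ordinal.{0}) : Acc (ExtRel (Inco (Pt x))) ([] : List (Pt x)) :=
  acc_extRel_of_isWqo (isWqo_Pt x) []

/-- The ordinal value of an element of `x.toType`. -/
noncomputable def ev {x : Ordinal.{0}} (t : x.ToType) : Ordinal.{0} :=
  ((ToType.mk (o := x)).symm t).1

theorem ev_lt {x : Ordinal.{0}} (t : x.ToType) : ev t < x :=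
  ((ToType.mk (o := x)).symm t).2

noncomputable def el (x : Ordinal.{0}) (γ : Ordinal.{0}) (h : γ < x) : x.ToType :=
  ToType.mk ⟨γ, h⟩

theorem ev_el (x γ : Ordinal.{0}) (h : γ < x) : ev (el x γ h) = γ := by
  rw [ev, el, OrderIso.symm_apply_apply]

theorem el_le_el_iff {x γ δ : Ordinal.{0}} {hγ : γ < x} {hδ : δ < x} :
    el x γ hγ ≤ el x δ hδ ↔ γ ≤ δ := by
  rw [el, el]
  exact OrderIso.le_iff_le _

theorem le_iff_ev {x : Ordinal.{0}} {t s : x.ToType} : t ≤ s ↔ ev t ≤ ev s := by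
  rw [ev, ev, Subtype.coe_le_coe, OrderIso.le_iff_le]

theorem width_Pt_mono {x y : Ordinal.{0}} (h : x ≤ y) : width (Pt x) ≤ width (Pt y) := by
  refine width_le_of_map (fun p => ⟨(el y (ev p.1.1) (lt_of_lt_of_le (ev_lt _) h),
    el y (ev p.1.2) (lt_of_lt_of_le (ev_lt _) h)), ?_⟩) ?_ (acc_Pt y)
  · rw [el_le_el_iff, ← le_iff_ev]
    exact p.2
  · intro a b hab
    rw [Subtype.mk_le_mk, Prod.le_def] at hab
    rw [← Subtype.coe_le_coe, Prod.le_def, le_iff_ev (t := a.1.1), le_iff_ev (t := a.1.2)]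
    rw [el_le_el_iff, el_le_el_iff] at hab
    exact hab

theorem one_add_le_add_one (x : Ordinal.{0}) : 1 + x ≤ x + 1 := by
  rcases lt_or_ge x ω with h | h
  · obtain ⟨n, rfl⟩ := Ordinal.lt_omega0.1 h
    exact le_of_eq (by exact_mod_cast Nat.add_comm 1 n)
  · rw [Ordinal.one_add_of_omega0_le h]; exact le_of_lt (lt_add_one x)

theorem width_Pt_step (x : Ordinal.{0}) :
    width (Pt x) + 1 ≤ width (Pt (x + 1 + 1)) := by
  have hb : ∀ v : Ordinal, v < x → 1 + v < x + 1 + 1 := by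
    intro v hv
    calc 1 + v < 1 + x := (add_lt_add_iff_left 1).2 hv
    _ ≤ x + 1 := one_add_le_add_one x
    _ < x + 1 + 1 := lt_add_one _
  have h0 : (0 : Ordinal) < x + 1 + 1 := lt_of_le_of_lt zero_le (lt_add_one _)
  have h1x : 1 + x < x + 1 + 1 := lt_of_le_of_lt (one_add_le_add_one x) (lt_add_one _)
  refine width_add_one_le
    (fun p => ⟨(el (x+1+1) (1 + ev p.1.1) (hb _ (ev_lt _)),
      el (x+1+1) (1 + ev p.1.2) (hb _ (ev_lt _))),
      el_le_el_iff.2 ((add_le_add_iff_left 1).2 (le_iff_ev.1 p.2))⟩)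
    ⟨(el (x+1+1) 0 h0, el (x+1+1) (1 + x) h1x), el_le_el_iff.2 zero_le⟩
    ?_ ?_ (acc_Pt _)
  · intro a b hab
    rw [Subtype.mk_le_mk, Prod.le_def] at hab
    rw [el_le_el_iff, el_le_el_iff] at hab
    rw [← Subtype.coe_le_coe, Prod.le_def, le_iff_ev (t := a.1.1), le_iff_ev (t := a.1.2)]
    exact ⟨(add_le_add_iff_left 1).1 hab.1, (add_le_add_iff_left 1).1 hab.2⟩
  · intro a
    constructor
    · intro h
      rw [← Subtype.coe_le_coe, Prod.le_def] at h
      have := el_le_el_iff.1 h.2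
      have := (add_le_add_iff_left 1).1 this
      exact absurd this (not_le.2 (ev_lt _))
    · intro h
      rw [← Subtype.coe_le_coe, Prod.le_def] at h
      have := el_le_el_iff.1 h.1
      have h0' : (0 : Ordinal) < 1 + ev a.1.1 :=
        lt_of_lt_of_le zero_lt_one le_self_add
      exact absurd this (not_le.2 h0')

theorem main_ind : ∀ γ : Ordinal.{0}, γ ≤ width (Pt (2 * γ)) := by
  intro γ
  induction γ using Ordinal.induction with
  | _ γ IH =>
    rcases eq_zero_or_pos γ with rfl | hγ
    · exact zero_le
    refine le_of_forall_lt fun β hβ => ?_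
    have hβ1 : β + 1 ≤ γ := Order.add_one_le_of_lt hβ
    have key : β + 1 ≤ width (Pt (2 * (β + 1))) := by
      have e : 2 * (β + 1) = 2 * β + 1 + 1 := by
        rw [mul_add, mul_one, add_assoc, one_add_one_eq_two]
      rw [e]
      calc β + 1 ≤ width (Pt (2 * β)) + 1 := add_le_add (IH β hβ) le_rfl
      _ ≤ _ := width_Pt_step (2 * β)
    calc β < β + 1 := lt_add_one β
    _ ≤ width (Pt (2 * (β + 1))) := key
    _ ≤ width (Pt (2 * γ)) := width_Pt_mono (mul_le_mul' le_rfl hβ1)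

theorem nadd_zero' (a : Ordinal.{0}) : a ♯ 0 = a := by
  induction a using Ordinal.induction with
  | _ a IH =>
    rw [Ordinal.nadd]
    apply le_antisymm
    · refine max_le (Ordinal.blsub_le_iff.2 fun a' h => ?_) (Ordinal.blsub_le_iff.2 fun b' h => ?_)
      · rw [IH a' h]; exact h
      · exact absurd h (not_lt_of_ge (zero_le : (0 : Ordinal) ≤ b'))
    · refine le_of_forall_lt fun a' h => ?_
      exact lt_of_lt_of_le (lt_of_eq_of_lt (IH a' h).symm
        (Ordinal.lt_blsub (fun a' _ => a' ♯ 0) a' h)) (le_max_left _ _)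

theorem zero_nadd' (b : Ordinal.{0}) : 0 ♯ b = b := by
  induction b using Ordinal.induction with
  | _ b IH =>
    rw [Ordinal.nadd]
    apply le_antisymm
    · refine max_le (Ordinal.blsub_le_iff.2 fun a' h => ?_) (Ordinal.blsub_le_iff.2 fun b' h => ?_)
      · exact absurd h (not_lt_of_ge (zero_le : (0 : Ordinal) ≤ a'))
      · rw [IH b' h]; exact h
    · refine le_of_forall_lt fun b' h => ?_
      exact lt_of_lt_of_le (lt_of_eq_of_lt (IH b' h).symm
        (Ordinal.lt_blsub (fun b' _ => 0 ♯ b') b' h)) (le_max_right _ _)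

theorem le_nadd_self' (c x : Ordinal.{0}) : c ≤ c ♯ x := by
  induction c using Ordinal.induction with
  | _ c IH =>
    refine le_of_forall_lt fun c' hc' => ?_
    rw [Ordinal.nadd]
    exact lt_of_le_of_lt (IH c' hc')
      (lt_of_lt_of_le (Ordinal.lt_blsub (fun a' _ => a' ♯ x) c' hc') (le_max_left _ _))

theorem nmul_zero' (a : Ordinal.{0}) : a ⨳ 0 = 0 := by
  rw [Ordinal.nmul]
  exact le_antisymm (csInf_le' (by intro a' _ b' hb'; exact absurd hb' (not_lt_of_ge (zero_le : (0 : Ordinal) ≤ b'))))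
    zero_le

theorem zero_nmul' (b : Ordinal.{0}) : 0 ⨳ b = 0 := by
  rw [Ordinal.nmul]
  exact le_antisymm (csInf_le' (by intro a' ha' b' _; exact absurd ha' (not_lt_of_ge (zero_le : (0 : Ordinal) ≤ a'))))
    zero_le

theorem nmul_mem (a b : Ordinal.{0}) :
    ∀ a' < a, ∀ b' < b, (a' ⨳ b) ♯ (a ⨳ b') < (a ⨳ b) ♯ (a' ⨳ b') := by
  have heq : a ⨳ b = sInf {c | ∀ a' < a, ∀ b' < b, (a' ⨳ b) ♯ (a ⨳ b') < c ♯ (a' ⨳ b')} := by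
    rw [Ordinal.nmul]
  have hne : Set.Nonempty {c | ∀ a' < a, ∀ b' < b, (a' ⨳ b) ♯ (a ⨳ b') < c ♯ (a' ⨳ b')} := by
    refine ⟨blsub.{0, 0} a fun a' _ => blsub.{0, 0} b fun b' _ => (a' ⨳ b) ♯ (a ⨳ b'), ?_⟩
    intro a' ha' b' hb'
    refine lt_of_lt_of_le ?_ (le_nadd_self' _ _)
    exact lt_of_lt_of_le (Ordinal.lt_blsub (fun b' _ => (a' ⨳ b) ♯ (a ⨳ b')) b' hb')
      (le_of_lt (Ordinal.lt_blsub
        (fun a' _ => blsub.{0, 0} b fun b' _ => (a' ⨳ b) ♯ (a ⨳ b')) a' ha'))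
  intro a' ha' b' hb'
  rw [heq]
  exact csInf_mem hne a' ha' b' hb'

theorem nmul_lt_left' {a a' b : Ordinal.{0}} (h : a' < a) (hb : 0 < b) : a' ⨳ b < a ⨳ b := by
  have := nmul_mem a b a' h 0 hb
  simpa only [nmul_zero', nadd_zero'] using this

theorem nmul_lt_right' {a b b' : Ordinal.{0}} (h : b' < b) (ha : 0 < a) : a ⨳ b' < a ⨳ b := by
  have := nmul_mem a b 0 ha b' h
  simpa only [zero_nmul', zero_nadd', nadd_zero'] using this

theorem le_nmul_one (x : Ordinal.{0}) : x ≤ x ⨳ 1 := by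
  induction x using Ordinal.induction with
  | _ x IH => exact le_of_forall_lt fun y hy => lt_of_le_of_lt (IH y hy) (nmul_lt_left' hy zero_lt_one)

theorem add_omega_le_nmul {x : Ordinal.{0}} (hx : 0 < x) : x + ω ≤ x ⨳ ω := by
  have h1 : ∀ n : ℕ, x + (n : Ordinal) ≤ x ⨳ ((n : Ordinal) + 1) := by
    intro n
    induction n with
    | zero => simpa using le_nmul_one x
    | succ n ih =>
      push_cast
      rw [← add_assoc]
      exact Order.add_one_le_of_lt (lt_of_le_of_lt ih (nmul_lt_right' (lt_add_one _) hx))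
  rw [Ordinal.add_le_iff_of_isSuccLimit Ordinal.isSuccLimit_omega0]
  intro b hb
  obtain ⟨n, rfl⟩ := Ordinal.lt_omega0.1 hb
  refine (h1 n).trans (le_of_lt (nmul_lt_right' ?_ hx))
  exact Ordinal.lt_omega0.2 ⟨n + 1, by simp⟩

theorem two_mul_le_add_omega (x : Ordinal.{0}) : 2 * x ≤ x + ω := by
  have hr : x % ω < ω := Ordinal.mod_lt x Ordinal.omega0_ne_zero
  obtain ⟨n, hn⟩ := Ordinal.lt_omega0.1 hr
  have h2 : (2 : Ordinal) * ω = ω :=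
    Ordinal.mul_omega0 (by norm_num) (Ordinal.lt_omega0.2 ⟨2, by simp⟩)
  calc 2 * x = 2 * (ω * (x / ω) + x % ω) := by rw [Ordinal.div_add_mod]
  _ = ω * (x / ω) + 2 * (n : Ordinal) := by rw [mul_add, ← mul_assoc, h2, hn]
  _ ≤ ω * (x / ω) + ω :=
    (add_le_add_iff_left _).2 (le_of_lt (Ordinal.lt_omega0.2 ⟨2 * n, by simp⟩))
  _ = ω * (x / ω) + x % ω + ω := by rw [add_assoc, Ordinal.add_omega0 hr]
  _ = x + ω := by rw [Ordinal.div_add_mod]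


open NaturalOps in
/-- For `α ≥ ω^ω` multiplicatively indecomposable, the widths of the posets
`P_{α'} = {(γ₀, γ₁) : γ₀ ≤ γ₁ < α'}` (ordered componentwise) for `α' < α` have
supremum at least `α`. -/
theorem width_increasing_pairs (α : Ordinal.{0}) (hα : ω ^ ω ≤ α)
    (hind : ∀ β γ : Ordinal.{0}, β < α → γ < α → β ⨳ γ < α) :
    α ≤ ⨆ β : Set.Iio α,
      width {p : (β : Ordinal).ToType × (β : Ordinal).ToType // p.1 ≤ p.2} := by
  have h2ω : (2 : Ordinal) < ω ^ ω := by
    calc (2 : Ordinal) < ω := by simpa using Ordinal.natCast_lt_omega0 2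
    _ = ω ^ (1 : Ordinal) := (opow_one ω).symm
    _ ≤ ω ^ ω := Ordinal.opow_le_opow_right Ordinal.omega0_pos Ordinal.one_lt_omega0.le
  have h2α : (2 : Ordinal) < α := h2ω.trans_le hα
  have hωα : ω < α := by
    calc ω = ω ^ (1 : Ordinal) := (opow_one ω).symm
    _ < ω ^ ω := (Ordinal.opow_lt_opow_iff_right Ordinal.one_lt_omega0).2 Ordinal.one_lt_omega0
    _ ≤ α := hα
  refine le_of_forall_lt fun δ hδ => ?_
  have hδ1 : δ + 1 < α := by
    rcases eq_or_ne δ 0 with rfl | hne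
    · simpa using lt_trans one_lt_two h2α
    · refine lt_of_lt_of_le ?_ (lt_of_le_of_lt (add_omega_le_nmul (pos_iff_ne_zero.2 hne))
        (hind δ ω hδ hωα)).le
      exact (add_lt_add_iff_left δ).2 (Ordinal.one_lt_omega0)
  have hβα : 2 * (δ + 1) < α :=
    lt_of_le_of_lt ((two_mul_le_add_omega _).trans (add_omega_le_nmul (lt_of_le_of_lt zero_le (lt_add_one δ))))
      (hind _ ω hδ1 hωα)
  have hw : δ + 1 ≤ width (Pt (2 * (δ + 1))) := main_ind (δ + 1)
  refine lt_of_lt_of_le (lt_add_one δ) (le_trans hw ?_)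
  exact Ordinal.le_iSup
    (fun β : Set.Iio α => width {p : (β : Ordinal).ToType × (β : Ordinal).ToType // p.1 ≤ p.2})
    ⟨2 * (δ + 1), hβα⟩
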